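/- The internal hom Hom(Δ^n, Δ^q) has dimension exactly (n+1)·q: it contains a non-degenerate simplex of degree (n+1)·q, and every simplex of degree greater than (n+1)·q is degenerate. -/

import Mathlib

open CategoryTheory Simplicial MonoidalCategory SSet Limits

universe u v

/-- A simplex is degenerate if it is the image of a degeneracy map. -/
def SDeg (X : SSet.{u}) : ∀ {n : ℕ}, X _⦋n⦌ → Prop := fun {n} x =>
    match n, x with
  | 0, _ => False
  | n + 1, x => ∃ (i : Fin (n + 1)) (y : X _⦋n⦌), x = X.map (SimplexCategory.σ i).op y

/-- The `i`-th elementary edge `X(φ(i,i+1))(x)` of a `p`-simplex `x`. -/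
def elemEdge (X : SSet.{u}) {p : ℕ} (x : X _⦋p⦌) (i : Fin p) : X _⦋1⦌ :=
  X.map (SimplexCategory.mkOfLe i.castSucc i.succ (Fin.castSucc_lt_succ (i := i)).le).op x

/-- The internal hom of simplicial sets: its `p`-simplices are the
simplicial maps `Δ[p] ⊗ U ⟶ X`. -/
noncomputable def sHom (U X : SSet.{u}) : SSet.{u} where
  obj m := stdSimplex.obj m.unop ⊗ U ⟶ X
  map φ := TypeCat.ofHom fun f => (SSet.stdSimplex.map φ.unop ▷ U) ≫ f
  map_id m := by ext f : 3; simp; erw [CategoryTheory.Functor.map_id]; simp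
  map_comp φ ψ := by ext f : 3; simp; erw [CategoryTheory.Functor.map_comp]; simp [MonoidalCategory.comp_whiskerRight]

/-!
A `p`-simplex of `Hom(Δ[n], Δ[q])` is a monotone map `[p] × [n] → [q]`, and it is degenerate
exactly when two adjacent columns `k`, `k + 1` agree. Along a non-degenerate simplex the column
sums `∑ⱼ f(k, j)` therefore strictly increase with `k` while staying in `0, …, (n + 1) q`, which
forces `p ≤ (n + 1) q`. Conversely, the staircase simplex of degree `(n + 1) q` changes exactly one
entry at each step, so it is non-degenerate.
-/

theorem sDeg_iff_exists_eq_map_σ_map_δ (X : SSet.{u}) {p : ℕ} (x : X _⦋p + 1⦌) :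
    SDeg X x ↔ ∃ i : Fin (p + 1),
      x = X.map (SimplexCategory.σ i).op (X.map (SimplexCategory.δ i.castSucc).op x) := by
  refine ⟨fun ⟨i, y, hy⟩ => ⟨i, ?_⟩, fun ⟨i, hx⟩ => ⟨i, _, hx⟩⟩
  subst hy
  rw [← Functor.map_comp_apply X (SimplexCategory.σ i).op, ← op_comp,
    SimplexCategory.δ_comp_σ_self, op_id, Functor.map_id_apply]

namespace sHom

open SimplexCategory

variable {n q p : ℕ}

/-- The value of a `p`-simplex `Δ[p] ⊗ Δ[n] ⟶ Δ[q]` at the vertex `(k, j)`; these values identify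
`p`-simplices with monotone maps `[p] × [n] → [q]`. -/
def vertexVal (f : (sHom Δ[n] Δ[q]) _⦋p⦌) (k : Fin (p + 1)) (j : Fin (n + 1)) : Fin (q + 1) :=
  (f.app (Opposite.op ⦋0⦌) (⟨const ⦋0⦌ ⦋p⦌ k⟩, ⟨const ⦋0⦌ ⦋n⦌ j⟩)).down.toOrderHom 0

theorem app_apply_eq_vertexVal {m : ℕ} (f : (sHom Δ[n] Δ[q]) _⦋p⦌)
    (a : ⦋m⦌ ⟶ ⦋p⦌) (b : ⦋m⦌ ⟶ ⦋n⦌) (i : Fin (m + 1)) :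
    (f.app (Opposite.op ⦋m⦌) (⟨a⟩, ⟨b⟩)).down.toOrderHom i
      = vertexVal f (a.toOrderHom i) (b.toOrderHom i) := by
  have h := congrArg (fun s => s.down.toOrderHom 0)
    (NatTrans.naturality_apply f (const ⦋0⦌ ⦋m⦌ i).op
      ((⟨a⟩, ⟨b⟩) : (Δ[p] ⊗ Δ[n] : SSet) _⦋m⦌))
  change (f.app _ (⟨const ⦋0⦌ ⦋m⦌ i ≫ a⟩, ⟨const ⦋0⦌ ⦋m⦌ i ≫ b⟩)).down.toOrderHom 0
    = (f.app _ (⟨a⟩, ⟨b⟩)).down.toOrderHom i at h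
  rw [SimplexCategory.const_comp, SimplexCategory.const_comp] at h
  exact h.symm

theorem vertexVal_le_vertexVal (f : (sHom Δ[n] Δ[q]) _⦋p⦌) {k k' : Fin (p + 1)}
    {j j' : Fin (n + 1)} (hk : k ≤ k') (hj : j ≤ j') : vertexVal f k j ≤ vertexVal f k' j' := by
  have h := (f.app (Opposite.op ⦋1⦌) (⟨mkOfLe k k' hk⟩, ⟨mkOfLe j j' hj⟩)).down.toOrderHom.monotone
    (show (0 : Fin 2) ≤ 1 by decide)
  rwa [app_apply_eq_vertexVal, app_apply_eq_vertexVal] at h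

theorem monotone_vertexVal (f : (sHom Δ[n] Δ[q]) _⦋p⦌) : Monotone (vertexVal f) :=
  fun _ _ hk _ => vertexVal_le_vertexVal f hk le_rfl

theorem vertexVal_injective : Function.Injective (vertexVal (n := n) (q := q) (p := p)) := by
  intro f g h
  refine NatTrans.ext (funext fun ⟨m⟩ => ?_)
  induction m using SimplexCategory.rec with | _ m => ?_
  refine ConcreteCategory.hom_ext _ _ fun ⟨⟨a⟩, ⟨b⟩⟩ => ULift.ext _ _ (Hom.ext _ _ ?_)
  ext i : 2
  rw [app_apply_eq_vertexVal, app_apply_eq_vertexVal, h]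

def ofMonotone (g : Fin (p + 1) → Fin (n + 1) → Fin (q + 1))
    (hg : ∀ {k k' j j'}, k ≤ k' → j ≤ j' → g k j ≤ g k' j') : (sHom Δ[n] Δ[q]) _⦋p⦌ where
  app _ := TypeCat.ofHom fun x => ⟨Hom.mk
    ⟨fun i => g (x.1.down.toOrderHom i) (x.2.down.toOrderHom i),
      fun _ _ hab => hg (x.1.down.toOrderHom.monotone hab) (x.2.down.toOrderHom.monotone hab)⟩⟩
  naturality _ _ _ := rfl

@[simp]
theorem vertexVal_ofMonotone (g : Fin (p + 1) → Fin (n + 1) → Fin (q + 1)) (hg) :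
    vertexVal (ofMonotone.{u} g hg) = g := rfl

theorem vertexVal_map {p' : ℕ} (θ : ⦋p'⦌ ⟶ ⦋p⦌) (f : (sHom Δ[n] Δ[q]) _⦋p⦌) (k : Fin (p' + 1)) :
    vertexVal ((sHom Δ[n] Δ[q]).map θ.op f) k = vertexVal f (θ.toOrderHom k) :=
  funext fun j => app_apply_eq_vertexVal f (const ⦋0⦌ ⦋p'⦌ k ≫ θ) (const ⦋0⦌ ⦋n⦌ j) 0

theorem sDeg_iff_exists_vertexVal_eq (f : (sHom Δ[n] Δ[q]) _⦋p⦌) :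
    SDeg (sHom Δ[n] Δ[q]) f ↔ ∃ i : Fin p, vertexVal f i.castSucc = vertexVal f i.succ := by
  cases p with
  | zero => simp [SDeg]
  | succ p =>
    rw [sDeg_iff_exists_eq_map_σ_map_δ]
    refine exists_congr fun i => ⟨fun h => ?_, fun h => vertexVal_injective (funext fun k => ?_)⟩
    · rw [h]
      simp only [vertexVal_map]
      change vertexVal f (i.castSucc.succAbove (i.predAbove i.castSucc))
        = vertexVal f (i.castSucc.succAbove (i.predAbove i.succ))
      rw [Fin.predAbove_castSucc_self, Fin.predAbove_succ_self]
    · rw [vertexVal_map]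
      change vertexVal f k = vertexVal f (i.castSucc.succAbove (i.predAbove k))
      by_cases hk : k = i.castSucc
      · rw [hk, Fin.predAbove_castSucc_self, Fin.succAbove_castSucc_self, h]
      · rw [Fin.succAbove_predAbove hk]

end sHom

open Finset in
theorem exists_castSucc_eq_succ_of_card_mul_lt {ι : Type*} [Fintype ι] {p q : ℕ}
    {g : Fin (p + 1) → ι → Fin (q + 1)} (hg : Monotone g) (hp : Fintype.card ι * q < p) :
    ∃ i : Fin p, g i.castSucc = g i.succ := by
  by_contra! hne
  have hg' : StrictMono g :=
    Fin.strictMono_iff_lt_succ.2 fun i => (hg i.castSucc_le_succ).lt_of_ne (hne i)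
  let S k := ∑ j, (g k j : ℕ)
  have hS : StrictMono S := fun a b hab =>
    let ⟨hle, j, hlt⟩ := Pi.lt_def.1 (hg' hab)
    sum_lt_sum (fun j _ => hle j) ⟨j, mem_univ _, hlt⟩
  have hS_le k : S k ≤ Fintype.card ι * q := by
    simpa using sum_le_sum fun j (_ : j ∈ univ) => Fin.is_le (g k j)
  have := card_le_card_of_injOn S (s := univ) (t := range (Fintype.card ι * q + 1))
    (fun k _ => mem_range.2 (Nat.lt_succ_of_le (hS_le k))) hS.injective.injOn
  simp only [card_univ, Fintype.card_fin, card_range] at this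
  omega

/-- Column `j` climbs from `0` to `q` while `k` runs through `[(n - j) q, (n - j + 1) q]`, so exactly
one entry increases at each step. -/
def staircase (n q : ℕ) (k : Fin ((n + 1) * q + 1)) (j : Fin (n + 1)) : Fin (q + 1) :=
  ⟨min q (k - (n - j) * q), Nat.lt_succ_of_le (min_le_left _ _)⟩

theorem staircase_mono (n q : ℕ) {k k' : Fin ((n + 1) * q + 1)} {j j' : Fin (n + 1)}
    (hk : k ≤ k') (hj : j ≤ j') : staircase n q k j ≤ staircase n q k' j' :=
  Fin.mk_le_mk.2 <| min_le_min le_rfl <| tsub_le_tsub hk <|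
    Nat.mul_le_mul_right _ (Nat.sub_le_sub_left hj n)

theorem staircase_castSucc_ne_succ (n q : ℕ) (i : Fin ((n + 1) * q)) :
    staircase n q i.castSucc ≠ staircase n q i.succ := by
  have hq : 0 < q := Nat.pos_of_mul_pos_left (Nat.zero_lt_of_lt i.is_lt)
  have hdiv : (i : ℕ) / q ≤ n := Nat.lt_succ_iff.1 ((Nat.div_lt_iff_lt_mul hq).2 i.is_lt)
  intro h
  have hcol := congrArg Fin.val (congrFun h ⟨n - i / q, Nat.lt_succ_of_le (Nat.sub_le n _)⟩)
  simp only [staircase, Fin.val_castSucc, Fin.val_succ, Nat.sub_sub_self hdiv] at hcol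
  have hmod := Nat.mod_lt i hq
  have hdecomp := Nat.div_add_mod' i q
  omega

/-- `Hom(Δ[n], Δ[q])` has dimension exactly `(n+1)·q`. -/
theorem stmt_16 (n q : ℕ) :
    (∃ f : (sHom (stdSimplex.{u}.obj ⦋n⦌) (stdSimplex.{u}.obj ⦋q⦌)) _⦋(n + 1) * q⦌,
      ¬ SDeg (sHom (stdSimplex.{u}.obj ⦋n⦌) (stdSimplex.{u}.obj ⦋q⦌)) f) ∧
    (∀ (p : ℕ)
      (f : (sHom (stdSimplex.{u}.obj ⦋n⦌) (stdSimplex.{u}.obj ⦋q⦌)) _⦋p + 1⦌),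
      (n + 1) * q < p + 1 →
        SDeg (sHom (stdSimplex.{u}.obj ⦋n⦌) (stdSimplex.{u}.obj ⦋q⦌)) f) := by
  refine ⟨⟨sHom.ofMonotone (staircase n q) (staircase_mono n q), ?_⟩, fun p f hp => ?_⟩
  · rw [sHom.sDeg_iff_exists_vertexVal_eq, sHom.vertexVal_ofMonotone]
    exact fun ⟨i, hi⟩ => staircase_castSucc_ne_succ n q i hi
  · rw [sHom.sDeg_iff_exists_vertexVal_eq]
    exact exists_castSucc_eq_succ_of_card_mul_lt (sHom.monotone_vertexVal f) (by simpa using hp)
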